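/- Termination of the lock-based procedure: consider a finite set P of state-action pairs, each with a potential Q(p) ∈ [0, 1/(1−γ)] initialized at 1/(1−γ), and a boolean lock per pair. At each step, either some unlocked pair has its potential decreased by at least ε (a successful update, which may unlock at most K other pairs), or an unlocked pair is locked (unsuccessful update). Then the procedure terminates (all pairs locked) after at most |P|·(1 + K)·(1 + 1/(ε(1−γ))) steps. -/
import Mathlib


theorem lock_procedure_termination {P : Type*} [Fintype P]
    (γ ε : ℝ) (hγ : γ ∈ Set.Ioo (0:ℝ) 1) (hε : ε ∈ Set.Ioo (0:ℝ) 1)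
    (K M : ℕ)
    (Q : ℕ → P → ℝ) (locked : ℕ → P → Bool)
    (hQinit : ∀ p, Q 0 p = 1 / (1 - γ))
    (hlinit : ∀ p, locked 0 p = false)
    (hbdd : ∀ n p, Q n p ∈ Set.Icc (0:ℝ) (1 / (1 - γ)))
    (hstep : ∀ n < M,
      (∃ p, locked n p = false ∧ Q (n + 1) p ≤ Q n p - ε ∧
        (∀ p', p' ≠ p → Q (n + 1) p' = Q n p') ∧
        (Finset.univ.filter
          (fun p' => locked n p' = true ∧ locked (n + 1) p' = false)).card ≤ K) ∨
      (∃ p, locked n p = false ∧ locked (n + 1) p = true ∧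
        (∀ p', Q (n + 1) p' = Q n p') ∧
        (∀ p', p' ≠ p → locked (n + 1) p' = locked n p')))
    (hdone : ∀ p, locked M p = true) :
    (M : ℝ) ≤ (Fintype.card P : ℝ) * (1 + K) * (1 + 1 / (ε * (1 - γ))) := by
  classical
  obtain ⟨hγ0, hγ1⟩ := hγ
  obtain ⟨hε0, hε1⟩ := hε
  have hγ' : (0:ℝ) < 1 - γ := by linarith
  set N := Fintype.card P with hN
  set Φ : ℕ → ℝ := fun n => ∑ p, Q n p with hΦ
  set U : ℕ → ℕ := fun n => (Finset.univ.filter (fun p => locked n p = false)).card with hU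
  set Succ : ℕ → Prop := fun n => ∃ p, locked n p = false ∧ Q (n + 1) p ≤ Q n p - ε ∧
      (∀ p', p' ≠ p → Q (n + 1) p' = Q n p') ∧
      (Finset.univ.filter
        (fun p' => locked n p' = true ∧ locked (n + 1) p' = false)).card ≤ K
    with hSuccDef
  -- Step lemma A: successful step decreases Φ by at least ε
  have stepA : ∀ n, Succ n → Φ (n+1) ≤ Φ n - ε := by
    intro n hs
    obtain ⟨p, hul, hdec, hoth, -⟩ := hs
    have h1 : ∑ p', (Q (n+1) p' - Q n p') = Q (n+1) p - Q n p := by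
      rw [Finset.sum_eq_single p]
      · intro b _ hb; rw [hoth b hb]; ring
      · intro h; exact absurd (Finset.mem_univ p) h
    have h2 : Φ (n+1) - Φ n = Q (n+1) p - Q n p := by
      simp only [hΦ]
      rw [← h1, Finset.sum_sub_distrib]
    linarith
  -- Step lemma B: unsuccessful step keeps Φ and decrements U
  have stepB : ∀ n < M, ¬ Succ n → Φ (n+1) = Φ n ∧ U n = U (n+1) + 1 := by
    intro n hn hns
    rcases hstep n hn with h | ⟨p, hfl, htr, hQeq, hoth⟩
    · exact absurd h hns
    constructor
    · simp only [hΦ]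
      exact Finset.sum_congr rfl (fun p _ => hQeq p)
    · have hset : Finset.univ.filter (fun q => locked (n+1) q = false) =
          (Finset.univ.filter (fun q => locked n q = false)).erase p := by
        ext q
        simp only [Finset.mem_erase, Finset.mem_filter, Finset.mem_univ, true_and]
        constructor
        · intro hq
          have hqp : q ≠ p := by
            rintro rfl
            rw [htr] at hq
            exact absurd hq (by simp)
          exact ⟨hqp, by rw [← hoth q hqp]; exact hq⟩
        · rintro ⟨hqp, hq⟩
          rw [hoth q hqp]; exact hq
      have hpmem : p ∈ Finset.univ.filter (fun q => locked n q = false) := by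
        simp [hfl]
      have hc : 0 < (Finset.univ.filter (fun q => locked n q = false)).card :=
        Finset.card_pos.mpr ⟨p, hpmem⟩
      simp only [hU, hset, Finset.card_erase_of_mem hpmem]
      omega
  -- Step lemma C: successful step increases U by at most K
  have stepC : ∀ n, Succ n → U (n+1) ≤ U n + K := by
    intro n hs
    obtain ⟨p, hul, hdec, hoth, hcard⟩ := hs
    have hsub : Finset.univ.filter (fun q => locked (n+1) q = false) ⊆
        Finset.univ.filter (fun q => locked n q = false) ∪
        Finset.univ.filter (fun q => locked n q = true ∧ locked (n+1) q = false) := by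
      intro q hq
      simp only [Finset.mem_filter, Finset.mem_univ, true_and, Finset.mem_union] at hq ⊢
      by_cases h : locked n q = true
      · right; exact ⟨h, hq⟩
      · left; simpa using h
    calc U (n+1) ≤ (Finset.univ.filter (fun q => locked n q = false) ∪
        Finset.univ.filter (fun q => locked n q = true ∧ locked (n+1) q = false)).card :=
          Finset.card_le_card hsub
      _ ≤ (Finset.univ.filter (fun q => locked n q = false)).card +
          (Finset.univ.filter (fun q => locked n q = true ∧ locked (n+1) q = false)).card :=
          Finset.card_union_le _ _
      _ ≤ U n + K := by
          simp only [hU]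
          exact Nat.add_le_add_left hcard _
  -- counters
  set S : ℕ → ℕ := fun n => ((Finset.range n).filter Succ).card with hSdef
  set L : ℕ → ℕ := fun n => ((Finset.range n).filter (fun i => ¬ Succ i)).card with hLdef
  have hSL : ∀ n, S n + L n = n := by
    intro n
    simp only [hSdef, hLdef]
    rw [Finset.card_filter_add_card_filter_not]
    exact Finset.card_range n
  -- main invariant
  have inv : ∀ n ≤ M, Φ n + ε * (S n : ℝ) ≤ Φ 0 ∧ U n + L n ≤ U 0 + K * S n := by
    intro n
    induction n with
    | zero => intro _; simp [hSdef, hLdef]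
    | succ n ih =>
      intro hn
      have hn' : n < M := hn
      obtain ⟨ih1, ih2⟩ := ih (le_of_lt hn')
      have hrange : Finset.range (n+1) = insert n (Finset.range n) := Finset.range_add_one
      by_cases hs : Succ n
      · have hS1 : S (n+1) = S n + 1 := by
          simp only [hSdef, hrange, Finset.filter_insert, if_pos hs]
          rw [Finset.card_insert_of_notMem (by simp)]
        have hL1 : L (n+1) = L n := by
          simp only [hLdef, hrange, Finset.filter_insert, if_neg (not_not_intro hs)]
        have hA := stepA n hs
        have hC := stepC n hs
        constructor
        · rw [hS1]; push_cast; linarith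
        · rw [hS1, hL1, Nat.mul_succ]
          set t := K * S n with ht
          omega
      · have hS1 : S (n+1) = S n := by
          simp only [hSdef, hrange, Finset.filter_insert, if_neg hs]
        have hL1 : L (n+1) = L n + 1 := by
          simp only [hLdef, hrange, Finset.filter_insert, if_pos hs]
          rw [Finset.card_insert_of_notMem (by simp)]
        obtain ⟨hB1, hB2⟩ := stepB n hn' hs
        constructor
        · rw [hS1, hB1]; exact ih1
        · rw [hS1, hL1]
          set t := K * S n with ht
          omega
  -- endpoint values
  have hUM : U M = 0 := by
    simp only [hU]
    rw [Finset.card_eq_zero, Finset.filter_eq_empty_iff]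
    intro p _
    simp [hdone p]
  have hU0 : U 0 = N := by
    simp only [hU]
    rw [Finset.filter_true_of_mem (fun p _ => hlinit p)]
    exact Finset.card_univ
  have hΦ0 : Φ 0 = (N : ℝ) / (1 - γ) := by
    simp only [hΦ]
    rw [Finset.sum_congr rfl (fun p _ => hQinit p), Finset.sum_const, Finset.card_univ,
      nsmul_eq_mul]
    rw [hN]
    ring
  have hΦM : 0 ≤ Φ M := Finset.sum_nonneg (fun p _ => (hbdd M p).1)
  obtain ⟨h1, h2⟩ := inv M le_rfl
  have hSLM := hSL M
  -- natural-number bound on M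
  have hMnat : M ≤ N + S M + K * S M := by
    rw [hUM, hU0] at h2
    omega
  set s : ℝ := (S M : ℝ) with hsdef
  have hs0 : 0 ≤ s := Nat.cast_nonneg _
  have hMreal : (M : ℝ) ≤ (N : ℝ) + s + (K : ℝ) * s := by
    rw [hsdef]
    exact_mod_cast hMnat
  have hεs : ε * s ≤ (N : ℝ) / (1 - γ) := by
    rw [hΦ0] at h1
    linarith
  have hεs' : ε * s * (1 - γ) ≤ (N : ℝ) := by
    have h := mul_le_mul_of_nonneg_right hεs hγ'.le
    rwa [div_mul_cancel₀ _ (ne_of_gt hγ')] at h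
  have hd : (0:ℝ) < ε * (1 - γ) := mul_pos hε0 hγ'
  have h3 : (M : ℝ) * (ε * (1 - γ)) ≤ ((N : ℝ) + s + (K : ℝ) * s) * (ε * (1 - γ)) :=
    mul_le_mul_of_nonneg_right hMreal hd.le
  have h4 : ((1:ℝ) + K) * (ε * s * (1 - γ)) ≤ (1 + K) * (N : ℝ) := by
    apply mul_le_mul_of_nonneg_left hεs'
    positivity
  have h5 : (0:ℝ) ≤ (K : ℝ) * N * (ε * (1 - γ)) := by positivity
  have key : (M : ℝ) * (ε * (1 - γ)) ≤ (N : ℝ) * (1 + K) * (ε * (1 - γ) + 1) := by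
    nlinarith [h3, h4, h5]
  have hfin : (M : ℝ) ≤ (N : ℝ) * (1 + K) * (ε * (1 - γ) + 1) / (ε * (1 - γ)) := by
    rw [le_div_iff₀ hd]
    exact key
  calc (M : ℝ) ≤ (N : ℝ) * (1 + K) * (ε * (1 - γ) + 1) / (ε * (1 - γ)) := hfin
    _ = (N : ℝ) * (1 + K) * (1 + 1 / (ε * (1 - γ))) := by
        field_simp
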